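/- Let a finite group Γ act on a finite set X with Γ-invariant probability distribution P, and let Q be the induced distribution on orbits. If the probability (under Q) that an orbit has size strictly less than |Γ| is at most δ, then 0 ≤ H(Q) - (H(P) - log₂|Γ|) ≤ δ·log₂|Γ|. -/
import Mathlib


open scoped Classical in
/-- If a finite group `Γ` acts on a finite set `X` with `Γ`-invariant probability
distribution `P`, `Q` is the induced distribution on orbits, and the `Q`-probability that
an orbit has size strictly less than `|Γ|` is at most `δ`, then
`0 ≤ H(Q) - (H(P) - log₂|Γ|) ≤ δ·log₂|Γ|`. -/
theorem structural_entropy_defect_bounds (Γ X : Type*) [Group Γ] [Fintype Γ]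
    [Fintype X] [MulAction Γ X]
    (P : X → ℝ) (h0 : ∀ x, 0 ≤ P x) (h1 : ∑ x, P x = 1)
    (hinv : ∀ (g : Γ) (x : X), P (g • x) = P x) (δ : ℝ)
    (hδ : ∑ O ∈ Finset.univ.filter (fun O : Quotient (MulAction.orbitRel Γ X) =>
          (Finset.univ.filter (fun x => Quotient.mk (MulAction.orbitRel Γ X) x = O)).card
            < Fintype.card Γ),
        (∑ x ∈ Finset.univ.filter (fun x => Quotient.mk (MulAction.orbitRel Γ X) x = O), P x)
      ≤ δ) :
    0 ≤ (-∑ O : Quotient (MulAction.orbitRel Γ X),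
            (∑ x ∈ Finset.univ.filter (fun x => Quotient.mk (MulAction.orbitRel Γ X) x = O), P x)
              * Real.logb 2
                (∑ x ∈ Finset.univ.filter (fun x => Quotient.mk (MulAction.orbitRel Γ X) x = O), P x))
          - ((-∑ x, P x * Real.logb 2 (P x)) - Real.logb 2 (Fintype.card Γ)) ∧
    (-∑ O : Quotient (MulAction.orbitRel Γ X),
            (∑ x ∈ Finset.univ.filter (fun x => Quotient.mk (MulAction.orbitRel Γ X) x = O), P x)
              * Real.logb 2
                (∑ x ∈ Finset.univ.filter (fun x => Quotient.mk (MulAction.orbitRel Γ X) x = O), P x))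
          - ((-∑ x, P x * Real.logb 2 (P x)) - Real.logb 2 (Fintype.card Γ))
      ≤ δ * Real.logb 2 (Fintype.card Γ) := by
  classical
  set R := MulAction.orbitRel Γ X with hR
  set L : ℝ := Real.logb 2 (Fintype.card Γ) with hLdef
  set fib : Quotient R → Finset X :=
    fun O => Finset.univ.filter (fun x => Quotient.mk R x = O) with hfibdef
  set q : Quotient R → ℝ := fun O => ∑ x ∈ fib O, P x with hqdef
  -- basic facts
  have hΓpos : (0:ℝ) < Fintype.card Γ := by exact_mod_cast Fintype.card_pos
  have hΓ1 : (1:ℝ) ≤ Fintype.card Γ := by exact_mod_cast Fintype.card_pos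
  have hL0 : 0 ≤ L := Real.logb_nonneg one_lt_two hΓ1
  -- P is constant on fibers
  have hconst : ∀ O : Quotient R, ∀ x ∈ fib O, P x = P O.out := by
    intro O x hx
    have hx' : Quotient.mk R x = Quotient.mk R O.out := by
      rw [Quotient.out_eq]
      exact (Finset.mem_filter.mp hx).2
    have hrel : MulAction.orbitRel Γ X x O.out := Quotient.eq''.mp hx'
    obtain ⟨g, hg⟩ := MulAction.orbitRel_apply.mp hrel
    rw [← hg]
    exact hinv g O.out
  have hmemfib : ∀ O : Quotient R, O.out ∈ fib O := by
    intro O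
    simp [hfibdef, Quotient.out_eq]
  have hqval : ∀ O : Quotient R, q O = (fib O).card * P O.out := by
    intro O
    show ∑ x ∈ fib O, P x = _
    rw [Finset.sum_congr rfl (hconst O), Finset.sum_const, nsmul_eq_mul]
  have hq0 : ∀ O : Quotient R, 0 ≤ q O := fun O =>
    Finset.sum_nonneg fun x _ => h0 x
  have hcardpos : ∀ O : Quotient R, 0 < (fib O).card := fun O =>
    Finset.card_pos.mpr ⟨O.out, hmemfib O⟩
  have hcardle : ∀ O : Quotient R, (fib O).card ≤ Fintype.card Γ := by
    intro O
    have hsub : fib O ⊆ Finset.univ.image (fun g : Γ => g • O.out) := by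
      intro x hx
      have hx' : Quotient.mk R x = Quotient.mk R O.out := by
        rw [Quotient.out_eq]; exact (Finset.mem_filter.mp hx).2
      obtain ⟨g, hg⟩ := MulAction.orbitRel_apply.mp (Quotient.eq''.mp hx')
      exact Finset.mem_image.mpr ⟨g, Finset.mem_univ g, hg⟩
    calc (fib O).card ≤ (Finset.univ.image (fun g : Γ => g • O.out)).card :=
          Finset.card_le_card hsub
      _ ≤ (Finset.univ : Finset Γ).card := Finset.card_image_le
      _ = Fintype.card Γ := Finset.card_univ
  -- q sums to 1
  have hqsum : ∑ O : Quotient R, q O = 1 := by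
    rw [hqdef]
    rw [Finset.sum_fiberwise Finset.univ (fun x => Quotient.mk R x) P]
    exact h1
  -- The defect equals the termwise expression
  have hdefect :
      (-∑ O : Quotient R, q O * Real.logb 2 (q O))
          - ((-∑ x, P x * Real.logb 2 (P x)) - L)
        = ∑ O : Quotient R, q O * (L - Real.logb 2 ((fib O).card)) := by
    have hHP : ∑ x, P x * Real.logb 2 (P x)
        = ∑ O : Quotient R, ((fib O).card : ℝ) * (P O.out * Real.logb 2 (P O.out)) := by
      rw [← Finset.sum_fiberwise Finset.univ (fun x => Quotient.mk R x)
        (fun x => P x * Real.logb 2 (P x))]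
      refine Finset.sum_congr rfl fun O _ => ?_
      rw [Finset.sum_congr rfl (fun x hx => by rw [hconst O x hx]), Finset.sum_const,
        nsmul_eq_mul]
    have key : ∀ O : Quotient R,
        q O * (L - Real.logb 2 ((fib O).card))
          = -(q O * Real.logb 2 (q O))
            + ((fib O).card : ℝ) * (P O.out * Real.logb 2 (P O.out)) + q O * L := by
      intro O
      have hnpos : (0:ℝ) < ((fib O).card : ℝ) := by exact_mod_cast hcardpos O
      rw [hqval O]
      rcases eq_or_lt_of_le (h0 O.out) with hp0 | hp0
      · rw [← hp0]
        simp
      · rw [Real.logb_mul (ne_of_gt hnpos) (ne_of_gt hp0)]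
        ring
    rw [hHP, Finset.sum_congr rfl (fun O _ => key O), Finset.sum_add_distrib,
      Finset.sum_add_distrib, Finset.sum_neg_distrib, ← Finset.sum_mul, hqsum, one_mul]
    ring
  rw [hdefect]
  constructor
  · refine Finset.sum_nonneg fun O _ => mul_nonneg (hq0 O) ?_
    have : Real.logb 2 ((fib O).card) ≤ L := by
      rw [hLdef]
      exact Real.logb_le_logb_of_le one_lt_two
        (by exact_mod_cast hcardpos O) (by exact_mod_cast hcardle O)
    linarith
  · -- split into symmetric (small) and asymmetric orbits
    rw [← Finset.sum_filter_add_sum_filter_not Finset.univ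
      (fun O : Quotient R => (fib O).card < Fintype.card Γ)]
    have hbig : ∑ O ∈ Finset.univ.filter
        (fun O : Quotient R => ¬ (fib O).card < Fintype.card Γ),
        q O * (L - Real.logb 2 ((fib O).card)) = 0 := by
      refine Finset.sum_eq_zero fun O hO => ?_
      have h1' : ¬ (fib O).card < Fintype.card Γ := (Finset.mem_filter.mp hO).2
      have heq : (fib O).card = Fintype.card Γ :=
        le_antisymm (hcardle O) (le_of_not_gt h1')
      rw [heq, hLdef]
      simp
    rw [hbig, add_zero]
    calc ∑ O ∈ Finset.univ.filter
          (fun O : Quotient R => (fib O).card < Fintype.card Γ),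
          q O * (L - Real.logb 2 ((fib O).card))
        ≤ ∑ O ∈ Finset.univ.filter
          (fun O : Quotient R => (fib O).card < Fintype.card Γ), q O * L := by
          refine Finset.sum_le_sum fun O _ => ?_
          refine mul_le_mul_of_nonneg_left ?_ (hq0 O)
          have : 0 ≤ Real.logb 2 ((fib O).card) :=
            Real.logb_nonneg one_lt_two (by exact_mod_cast hcardpos O)
          linarith
      _ = (∑ O ∈ Finset.univ.filter
          (fun O : Quotient R => (fib O).card < Fintype.card Γ), q O) * L := by
          rw [Finset.sum_mul]
      _ ≤ δ * L := mul_le_mul_of_nonneg_right hδ hL0
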